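/- arXiv:2505.09505 — 6 statements merged into one kernel-verified Lean document; each statement's English description precedes it below -/
import Mathlib

section
/- Let A be the (n-1)×(n-1) matrix over F_2 whose first n-2 rows form the shift pattern (A has 1 in position (i, i+1) for 1 ≤ i ≤ n-2 and 0 elsewhere in those rows) and whose last row is all ones. Then for each k with 1 ≤ k ≤ n-1, the k-th power A^k has block structure: the top (n-1-k) rows are [0_{(n-1-k)×k} | I_{n-1-k}], the next row is the all-ones row vector, and the bottom (k-1) rows are [I_{k-1} | 0_{(k-1)×(n-k)}]. -/
/-- The circulant-type matrix `A` of Lemma 1: `A[i][i+1] = 1` for the first `n-2` rows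
(0-indexed rows `0,…,n-3`), last row all ones, zeros elsewhere. -/
def Amat (n : ℕ) : Matrix (Fin (n-1)) (Fin (n-1)) (ZMod 2) :=
  Matrix.of fun i j => if (i : ℕ) = n - 2 then 1 else if (j : ℕ) = (i : ℕ) + 1 then 1 else 0

/-- For `1 ≤ k ≤ n-1`, `A^k` has the block structure: the top `n-1-k` rows are
`[0_{(n-1-k)×k} | I_{n-1-k}]` (entry 1 exactly at column `i+k`), the next row
(row `n-1-k`) is all ones, and the bottom `k-1` rows are `[I_{k-1} | 0_{(k-1)×(n-k)}]`
(entry 1 exactly at column `i - (n-k)`, i.e. where `j + n = i + k`). -/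
theorem stmt_0 (n : ℕ) (hn : 3 ≤ n) (k : ℕ) (hk1 : 1 ≤ k) (hk2 : k ≤ n - 1) :
    Amat n ^ k = Matrix.of fun (i j : Fin (n-1)) =>
      if (i : ℕ) + k < n - 1 then (if (j : ℕ) = (i : ℕ) + k then 1 else 0)
      else if (i : ℕ) + k = n - 1 then 1
      else if (j : ℕ) + n = (i : ℕ) + k then 1 else 0 := by
  induction k, hk1 using Nat.le_induction with
  | base =>
    rw [pow_one]
    ext i j
    have hi := i.isLt
    have hj := j.isLt
    simp only [Amat, Matrix.of_apply]
    split_ifs <;> first | rfl | omega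
  | succ k hk ih =>
    have hk2' : k ≤ n - 1 := by omega
    rw [pow_succ, ih hk2']
    ext i j
    rw [Matrix.mul_apply]
    have hi := i.isLt
    have hj := j.isLt
    have hA : ∀ l : Fin (n-1), Amat n l j =
        (if l = (⟨n-2, by omega⟩ : Fin (n-1)) then (1 : ZMod 2) else 0) +
        (if (j : ℕ) = (l : ℕ) + 1 then 1 else 0) := by
      intro l
      have hl := l.isLt
      simp only [Amat, Matrix.of_apply, Fin.ext_iff]
      split_ifs <;> first | omega | norm_num
    simp only [hA, mul_add, mul_ite, mul_one, mul_zero]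
    rw [Finset.sum_add_distrib, Finset.sum_ite_eq' Finset.univ]
    by_cases hj0 : (j : ℕ) = 0
    · have h2 : ∀ l : Fin (n-1), ¬ ((j : ℕ) = (l : ℕ) + 1) := fun l => by omega
      simp only [h2, if_false, Finset.sum_const_zero, Finset.mem_univ, if_true,
        Matrix.of_apply, add_zero]
      split_ifs <;> first | rfl | omega | decide
    · obtain ⟨jv, hjv⟩ : ∃ jv, (j : ℕ) = jv + 1 := ⟨(j : ℕ) - 1, by omega⟩
      have h2 : ∀ l : Fin (n-1), ((j : ℕ) = (l : ℕ) + 1) ↔ l = ⟨jv, by omega⟩ := by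
        intro l
        simp only [Fin.ext_iff]
        omega
      simp only [h2]
      rw [Finset.sum_ite_eq' Finset.univ]
      simp only [Finset.mem_univ, if_true, Matrix.of_apply]
      split_ifs <;> first | rfl | omega | decide
end

section
/- Let A be the (n-1)×(n-1) circulant-type matrix over F_2 with A[i][i+1]=1 for 1 ≤ i ≤ n-2, last row all ones, and zeros elsewhere, and let v = (1,0,...,0)^T ∈ F_2^{n-1}. Then the set {v, v+Av, v+Av+A²v, ..., v+Av+⋯+A^{n-2}v} is a basis of F_2^{n-1}. -/
/-- v = (1,0,…,0)ᵀ ∈ F₂^{n-1}. -/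
def vVec (n : ℕ) : Fin (n-1) → ZMod 2 := fun i => if (i : ℕ) = 0 then 1 else 0

lemma key (n : ℕ) (hn : 3 ≤ n) : ∀ k : ℕ, k < n - 1 →
    (∑ i ∈ Finset.range (k+1), (Amat n ^ i).mulVec (vVec n)) =
      fun i : Fin (n-1) => if (i:ℕ) = 0 then 1 else if (i:ℕ) = (n-1) - k then 1 else 0 := by
  intro k
  induction k with
  | zero =>
    intro _
    simp only [zero_add, Finset.range_one, Finset.sum_singleton, pow_zero, Matrix.one_mulVec]
    funext i
    have hi := i.isLt
    simp only [vVec]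
    split_ifs <;> first | rfl | omega
  | succ k ih =>
    intro hk
    have hk' : k < n - 1 := by omega
    rw [Finset.sum_range_succ']
    have h1 : ∑ i ∈ Finset.range (k+1), (Amat n ^ (i+1)).mulVec (vVec n)
        = (Amat n).mulVec (∑ i ∈ Finset.range (k+1), (Amat n ^ i).mulVec (vVec n)) := by
      simp only [← Matrix.mulVecLin_apply, map_sum, pow_succ', Matrix.mulVecLin_mul,
        LinearMap.comp_apply]
    rw [h1, ih hk', pow_zero, Matrix.one_mulVec]
    funext i
    have hi := i.isLt
    simp only [Pi.add_apply, Matrix.mulVec, dotProduct, vVec, Amat, Matrix.of_apply]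
    by_cases hk0 : k = 0
    · subst hk0
      have hval : ∀ j : Fin (n-1), (if (j:ℕ) = 0 then (1:ZMod 2) else if (j:ℕ) = n-1-0 then 1 else 0)
          = if (j:ℕ) = 0 then 1 else 0 := by
        intro j; have := j.isLt; split_ifs <;> first | rfl | omega
      simp only [hval]
      rw [Finset.sum_eq_single (⟨0, by omega⟩ : Fin (n-1))]
      · simp only []
        split_ifs <;> first | rfl | decide | omega | (exfalso; assumption)
      · intro j _ hj
        have hj' : (j:ℕ) ≠ 0 := by
          intro h; apply hj; exact Fin.ext h
        simp [hj']
      · simp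
    · -- k ≥ 1, so c := n-1-k satisfies 1 ≤ c ≤ n-2
      set c := n - 1 - k with hc
      have hc1 : 1 ≤ c := by omega
      have hc2 : c ≤ n - 2 := by omega
      have hval : ∀ j : Fin (n-1), (if (j:ℕ) = 0 then (1:ZMod 2) else if (j:ℕ) = c then 1 else 0)
          = (if (j:ℕ) = 0 then 1 else 0) + (if (j:ℕ) = c then 1 else 0) := by
        intro j; split_ifs <;> first | omega | simp
      simp only [hval, mul_add, Finset.sum_add_distrib]
      rw [Finset.sum_eq_single (⟨0, by omega⟩ : Fin (n-1)),
          Finset.sum_eq_single (⟨c, by omega⟩ : Fin (n-1))]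
      · simp only []
        split_ifs <;> first | rfl | decide | omega | (exfalso; assumption)
      · intro j _ hj
        have hj' : (j:ℕ) ≠ c := fun h => hj (Fin.ext h)
        simp [hj']
      · simp
      · intro j _ hj
        have hj' : (j:ℕ) ≠ 0 := fun h => hj (Fin.ext h)
        simp [hj']
      · simp

/-- The family `v, v + Av, …, v + Av + ⋯ + A^{n-2}v` is a basis of `F₂^{n-1}`:
it is linearly independent and spans. -/
theorem stmt_1 (n : ℕ) (hn : 3 ≤ n) :
    LinearIndependent (ZMod 2)
      (fun k : Fin (n-1) => ∑ i ∈ Finset.range ((k : ℕ) + 1), (Amat n ^ i).mulVec (vVec n)) ∧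
    Submodule.span (ZMod 2)
      (Set.range fun k : Fin (n-1) =>
        ∑ i ∈ Finset.range ((k : ℕ) + 1), (Amat n ^ i).mulVec (vVec n)) = ⊤ := by
  set f : Fin (n-1) → (Fin (n-1) → ZMod 2) :=
    fun k => ∑ i ∈ Finset.range ((k : ℕ) + 1), (Amat n ^ i).mulVec (vVec n) with hf
  have hfk : ∀ k : Fin (n-1),
      f k = fun i : Fin (n-1) => if (i:ℕ) = 0 then 1 else if (i:ℕ) = (n-1) - (k:ℕ) then 1 else 0 :=
    fun k => key n hn k k.isLt
  have hspan : ⊤ ≤ Submodule.span (ZMod 2) (Set.range f) := by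
    rw [← (Pi.basisFun (ZMod 2) (Fin (n-1))).span_eq]
    apply Submodule.span_le.2
    rintro _ ⟨j, rfl⟩
    rw [Pi.basisFun_apply]
    by_cases hj : (j:ℕ) = 0
    · have : (Pi.single j 1 : Fin (n-1) → ZMod 2) = f ⟨0, by omega⟩ := by
        rw [hfk]
        funext i
        have hi := i.isLt
        simp only [Pi.single_apply, Fin.ext_iff, hj]
        split_ifs <;> first | rfl | omega
      rw [this]
      exact Submodule.subset_span ⟨_, rfl⟩
    · have hj1 : 1 ≤ (j:ℕ) := by omega
      have hjlt := j.isLt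
      have : (Pi.single j 1 : Fin (n-1) → ZMod 2)
          = f ⟨n - 1 - (j:ℕ), by omega⟩ - f ⟨0, by omega⟩ := by
        rw [hfk, hfk]
        funext i
        have hi := i.isLt
        simp only [Pi.single_apply, Fin.ext_iff, Pi.sub_apply]
        split_ifs <;> first | rfl | decide | omega
      rw [this]
      exact Submodule.sub_mem _ (Submodule.subset_span ⟨_, rfl⟩)
        (Submodule.subset_span ⟨_, rfl⟩)
  have hcard : Fintype.card (Fin (n-1))
      = Module.finrank (ZMod 2) (Fin (n-1) → ZMod 2) := by
    simp [Module.finrank_fintype_fun_eq_card]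
  exact ⟨linearIndependent_of_top_le_span_of_card_eq_finrank hspan hcard,
    le_antisymm le_top hspan⟩
end

section
/- Let A be the (n-1)×(n-1) matrix over F_2 with A[i][i+1]=1 for 1 ≤ i ≤ n-2, last row all ones, and zeros elsewhere. Then I + A + A² + ⋯ + A^{n-1} = 0, i.e., the sum of the first n powers of A (starting at A^0 = I) is the zero matrix. -/
/-- Explicit formula for the powers of `Amat`. -/
def Bmat (n k : ℕ) : Matrix (Fin (n-1)) (Fin (n-1)) (ZMod 2) :=
  Matrix.of fun i j =>
    (if ((i : ℕ) + k) % n = n - 1 then 1 else 0) +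
    (if ((i : ℕ) + k) % n = (j : ℕ) then 1 else 0)

lemma zmod2_add (a b : ZMod 2) : (1 + a) + (1 + b) = a + b := by revert a b; decide

lemma count_lemma (n k c : ℕ) (hn : 0 < n) (hc : c < n) :
    ∑ l ∈ Finset.range n, (if (l + k) % n = c then (1 : ZMod 2) else 0) = 1 := by
  set l₀ := (c + (n - k % n)) % n with hl₀
  have hmod : (l₀ + k) % n = c := by
    rw [hl₀, Nat.mod_add_mod]
    have h1 : c + (n - k % n) + k = c + n * (k / n) + n := by
      have := Nat.div_add_mod k n
      have := Nat.mod_lt k hn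
      omega
    rw [h1, Nat.add_mod_right, Nat.add_mul_mod_self_left, Nat.mod_eq_of_lt hc]
  rw [Finset.sum_eq_single l₀]
  · rw [if_pos hmod]
  · intro l hl hne
    rw [if_neg]
    intro hlc
    apply hne
    have h2 : (l + k) % n = (l₀ + k) % n := by rw [hmod, hlc]
    have h3 : l % n = l₀ % n := Nat.ModEq.add_right_cancel' k h2
    rw [Nat.mod_eq_of_lt (Finset.mem_range.mp hl),
        Nat.mod_eq_of_lt (Nat.mod_lt _ hn)] at h3
    exact h3
  · intro h
    exact absurd (Finset.mem_range.mpr (Nat.mod_lt _ hn)) h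

lemma count_lemma' (n k c : ℕ) (hn : 3 ≤ n) (hc : c < n) :
    ∑ l ∈ Finset.range (n-1), (if (l + k) % n = c then (1 : ZMod 2) else 0)
      = 1 + (if (n - 1 + k) % n = c then (1 : ZMod 2) else 0) := by
  have hsucc : n - 1 + 1 = n := by omega
  set f : ℕ → ZMod 2 := fun l => if (l + k) % n = c then (1 : ZMod 2) else 0 with hf
  have hx : ∀ x : ZMod 2, x + x = 0 := by decide
  have h2 : (∑ l ∈ Finset.range (n-1), f l) + f (n-1) = 1 := by
    rw [← Finset.sum_range_succ, hsucc]
    exact count_lemma n k c (by omega) hc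
  calc ∑ l ∈ Finset.range (n-1), f l
      = (∑ l ∈ Finset.range (n-1), f l) + f (n-1) + f (n-1) := by
        rw [add_assoc, hx, add_zero]
    _ = 1 + f (n-1) := by rw [h2]

lemma pow_eq (n : ℕ) (hn : 3 ≤ n) (k : ℕ) : Amat n ^ k = Bmat n k := by
  induction k with
  | zero =>
    ext i j
    have hi : (i : ℕ) < n - 1 := i.isLt
    simp only [pow_zero, Bmat, Matrix.of_apply, Matrix.one_apply]
    rw [Nat.mod_eq_of_lt (by omega : (i : ℕ) + 0 < n), if_neg (by omega : ¬ ((i:ℕ)+0 = n-1))]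
    by_cases h : i = j
    · subst h; simp
    · rw [if_neg h, if_neg (by simpa [Fin.ext_iff, eq_comm] using h)]
      simp
  | succ k ih =>
    rw [pow_succ', ih]
    ext i j
    rw [Matrix.mul_apply]
    by_cases hi : (i : ℕ) = n - 2
    · simp only [Amat, Matrix.of_apply, if_pos hi, one_mul]
      have hstep : ∑ l : Fin (n-1), Bmat n k l j
          = ∑ l ∈ Finset.range (n-1),
              ((if (l + k) % n = n - 1 then (1 : ZMod 2) else 0)
               + (if (l + k) % n = (j : ℕ) then (1 : ZMod 2) else 0)) := by
        rw [← Fin.sum_univ_eq_sum_range]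
        rfl
      rw [hstep, Finset.sum_add_distrib,
        count_lemma' n k (n-1) hn (by omega),
        count_lemma' n k (j : ℕ) hn (by have := j.isLt; omega)]
      have harith : (i : ℕ) + (k + 1) = n - 1 + k := by omega
      simp only [Bmat, Matrix.of_apply, harith]
      exact zmod2_add _ _
    · have hilt : (i : ℕ) < n - 2 := by have := i.isLt; omega
      set l₀ : Fin (n-1) := ⟨(i : ℕ) + 1, by omega⟩ with hl₀
      simp only [Amat, Matrix.of_apply, if_neg hi]
      have hterm : ∀ l : Fin (n-1),
          (if (l : ℕ) = (i : ℕ) + 1 then (1 : ZMod 2) else 0) * Bmat n k l j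
            = if l = l₀ then Bmat n k l j else 0 := by
        intro l
        by_cases h : l = l₀
        · rw [if_pos h, if_pos (by rw [h]), one_mul]
        · rw [if_neg h, if_neg (by simpa [hl₀, Fin.ext_iff] using h), zero_mul]
      rw [Finset.sum_congr rfl (fun l _ => hterm l), Finset.sum_ite_eq' Finset.univ l₀ _]
      rw [if_pos (Finset.mem_univ l₀)]
      simp only [Bmat, Matrix.of_apply, hl₀]
      norm_num [show (i:ℕ) + 1 + k = (i:ℕ) + (k+1) from by omega]

/-- `I + A + A² + ⋯ + A^{n-1} = 0` over `F₂`. -/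
theorem stmt_4 (n : ℕ) (hn : 3 ≤ n) :
    ∑ i ∈ Finset.range n, Amat n ^ i = 0 := by
  ext a b
  rw [Matrix.sum_apply]
  have h1 : ∀ k ∈ Finset.range n, (Amat n ^ k) a b
      = (if ((a : ℕ) + k) % n = n - 1 then (1 : ZMod 2) else 0)
        + (if ((a : ℕ) + k) % n = (b : ℕ) then (1 : ZMod 2) else 0) := by
    intro k _
    rw [pow_eq n hn k]
    rfl
  rw [Finset.sum_congr rfl h1, Finset.sum_add_distrib]
  have hc : ∀ c, c < n → ∑ k ∈ Finset.range n,
      (if ((a : ℕ) + k) % n = c then (1 : ZMod 2) else 0) = 1 := by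
    intro c hcn
    rw [show (fun k => if ((a:ℕ) + k) % n = c then (1 : ZMod 2) else 0)
        = (fun k => if (k + (a:ℕ)) % n = c then (1 : ZMod 2) else 0) from by
      funext k; rw [Nat.add_comm]]
    exact count_lemma n (a : ℕ) c (by omega) hcn
  rw [hc (n-1) (by omega), hc (b : ℕ) (by have := b.isLt; omega), Matrix.zero_apply]
  decide
end

section
/- Let U be the (n-1)×(n-1) matrix over F_2 whose first n-2 rows form the anti-diagonal identity on the first n-2 columns (U[i][n-1-i]=1 for 1 ≤ i ≤ n-2) with last column zero in those rows, and whose last row is all ones; let V be the (n-1)×(n-1) anti-diagonal permutation matrix (V[i][n-i]=1). Then U² = V² = I and (UV)^n = I, and the subgroup of GL(n-1, F_2) generated by U and V is isomorphic to the dihedral group of order 2n. -/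
/-- The matrix `U` of Lemma 3: `U[i][n-1-i] = 1` (1-indexed) for the first `n-2` rows,
i.e. (0-indexed) row `i` has a 1 at column `n-3-i` for `i ≤ n-3`, and the last row is
all ones. -/
def Umat (n : ℕ) : Matrix (Fin (n-1)) (Fin (n-1)) (ZMod 2) :=
  Matrix.of fun i j =>
    if (i : ℕ) = n - 2 then 1 else if (i : ℕ) + (j : ℕ) = n - 3 then 1 else 0

/-- The anti-diagonal permutation matrix `V` of Lemma 3: `V[i][n-i] = 1` (1-indexed). -/
def Vmat (n : ℕ) : Matrix (Fin (n-1)) (Fin (n-1)) (ZMod 2) :=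
  Matrix.of fun i j => if (i : ℕ) + (j : ℕ) = n - 2 then 1 else 0

def Mmat (n t : ℕ) : Matrix (Fin (n-1)) (Fin (n-1)) (ZMod 2) :=
  Matrix.of fun i j =>
    if ((i : ℕ) + t) % n = n - 1 then 1 else if ((i : ℕ) + t) % n = (j : ℕ) then 1 else 0

lemma sum_eq_at {m : ℕ} (c : Fin m) (g : Fin m → ZMod 2) (h : ∀ k, k ≠ c → g k = 0) :
    ∑ k, g k = g c :=
  Finset.sum_eq_single_of_mem c (Finset.mem_univ c) (fun b _ hb => h b hb)

lemma Vsq (n : ℕ) (hn : 3 ≤ n) : Vmat n ^ 2 = 1 := by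
  have hm : 2 ≤ n - 1 := by omega
  ext i j
  have hc : (n - 2 - (i : ℕ)) < n - 1 := by omega
  rw [pow_two, Matrix.mul_apply,
    sum_eq_at ⟨n - 2 - (i : ℕ), hc⟩ _ (fun k hk => ?_)]
  · have hi := i.isLt
    have hj := j.isLt
    simp only [Vmat, Matrix.of_apply, Matrix.one_apply]
    split_ifs <;> first | rfl | (exfalso; omega)
  · have hk' : (k : ℕ) ≠ n - 2 - (i : ℕ) := fun h => hk (Fin.ext h)
    have hi := i.isLt
    simp only [Vmat, Matrix.of_apply]
    rw [if_neg (by omega), zero_mul]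

lemma Usq (n : ℕ) (hn : 3 ≤ n) : Umat n ^ 2 = 1 := by
  have hm : 2 ≤ n - 1 := by omega
  ext i j
  have hi := i.isLt
  have hj := j.isLt
  rw [pow_two, Matrix.mul_apply]
  by_cases hil : (i : ℕ) = n - 2
  · -- last row: all ones, compute column sum
    have hsplit : ∀ k : Fin (n-1), Umat n i k * Umat n k j
        = ((if k = (⟨n-2, by omega⟩ : Fin (n-1)) then (1:ZMod 2) else 0)
           + (if (k:ℕ) + (j:ℕ) = n - 3 then (1:ZMod 2) else 0)) := by
      intro k
      have hk := k.isLt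
      simp only [Umat, Matrix.of_apply, Fin.ext_iff]
      split_ifs <;> first | rfl | (exfalso; omega) | decide
    rw [Finset.sum_congr rfl (fun k _ => hsplit k), Finset.sum_add_distrib,
      Fintype.sum_ite_eq']
    by_cases hjl : (j : ℕ) ≤ n - 3
    · rw [sum_eq_at ⟨n-3-(j:ℕ), by omega⟩ _ (fun k hk => by
        have hk' : ¬ ((k:ℕ) = n - 3 - (j:ℕ)) := by simpa [Fin.ext_iff] using hk
        rw [if_neg (by omega)])]
      rw [if_pos (show n-3-(j:ℕ)+(j:ℕ) = n-3 by omega), Matrix.one_apply,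
        if_neg (show ¬ i = j by omega)]
      decide
    · rw [Finset.sum_eq_zero (fun k _ => by rw [if_neg]; have := k.isLt; omega),
        Matrix.one_apply, if_pos (show i = j by omega)]
      exact add_zero 1
  · -- row i = e_{n-3-i}
    rw [sum_eq_at ⟨n-3-(i:ℕ), by omega⟩ _ (fun k hk => by
      have hk' : (k:ℕ) ≠ n - 3 - (i:ℕ) := fun h => hk (Fin.ext h)
      have hk2 := k.isLt
      simp only [Umat, Matrix.of_apply]
      rw [if_neg hil, if_neg (by omega), zero_mul])]
    simp only [Umat, Matrix.of_apply, Matrix.one_apply]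
    split_ifs <;> first | rfl | (exfalso; omega) | decide

lemma hUV (n : ℕ) (hn : 3 ≤ n) : Umat n * Vmat n = Mmat n 1 := by
  ext i j
  have hi := i.isLt
  have hj := j.isLt
  rw [Matrix.mul_apply,
    sum_eq_at ⟨n-2-(j:ℕ), by omega⟩ _ (fun k hk => by
      have hk' : ¬ ((k:ℕ) = n - 2 - (j:ℕ)) := by simpa [Fin.ext_iff] using hk
      simp only [Vmat, Matrix.of_apply]
      rw [if_neg (by omega), mul_zero])]
  have h2 : ((i:ℕ) + 1) % n = (i:ℕ) + 1 := Nat.mod_eq_of_lt (by omega)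
  simp only [Umat, Vmat, Mmat, Matrix.of_apply, h2]
  rw [if_pos (show (n-2-(j:ℕ)) + (j:ℕ) = n-2 by omega), mul_one]
  split_ifs <;> first | rfl | (exfalso; omega)

lemma hstep (n : ℕ) (hn : 3 ≤ n) (t : ℕ) : Mmat n t * Mmat n 1 = Mmat n (t + 1) := by
  ext i j
  have hi := i.isLt
  have hj := j.isLt
  have hs : ((i:ℕ) + t) % n < n := Nat.mod_lt _ (by omega)
  have h1n : (1:ℕ) % n = 1 := Nat.mod_eq_of_lt (by omega)
  have hmod : ((i:ℕ) + (t + 1)) % n = (((i:ℕ) + t) % n + 1) % n := by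
    calc ((i:ℕ) + (t+1)) % n = (((i:ℕ)+t) + 1) % n := by rw [Nat.add_assoc]
      _ = (((i:ℕ)+t) % n + 1 % n) % n := Nat.add_mod _ _ _
      _ = (((i:ℕ)+t) % n + 1) % n := by rw [h1n]
  rw [Matrix.mul_apply]
  by_cases hs1 : ((i:ℕ) + t) % n = n - 1
  · -- all-ones row
    have hrow : ∀ k : Fin (n-1), Mmat n t i k = 1 := fun k => by
      simp only [Mmat, Matrix.of_apply]; rw [if_pos hs1]
    have hmod0 : ((i:ℕ) + (t+1)) % n = 0 := by
      rw [hmod, hs1, show n - 1 + 1 = n by omega, Nat.mod_self]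
    rw [Finset.sum_congr rfl (fun k _ => by rw [hrow k, one_mul])]
    have hsplit : ∀ k : Fin (n-1), Mmat n 1 k j
        = ((if k = (⟨n-2, by omega⟩ : Fin (n-1)) then (1:ZMod 2) else 0)
          + (if (k:ℕ) + 1 = (j:ℕ) then (1:ZMod 2) else 0)) := fun k => by
      have hk := k.isLt
      have hk1 : ((k:ℕ) + 1) % n = (k:ℕ) + 1 := Nat.mod_eq_of_lt (by omega)
      simp only [Mmat, Matrix.of_apply, hk1, Fin.ext_iff]
      split_ifs <;> first | rfl | (exfalso; omega) | decide
    rw [Finset.sum_congr rfl (fun k _ => hsplit k), Finset.sum_add_distrib,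
      Fintype.sum_ite_eq']
    simp only [Mmat, Matrix.of_apply, hmod0]
    rw [if_neg (show ¬ (0:ℕ) = n - 1 by omega)]
    by_cases hj0 : (j:ℕ) = 0
    · rw [Finset.sum_eq_zero (fun k _ => by rw [if_neg (by omega)]),
        if_pos (show (0:ℕ) = (j:ℕ) by omega)]
      exact add_zero 1
    · rw [sum_eq_at ⟨(j:ℕ)-1, by omega⟩ _ (fun k hk => by
        have hk' : ¬ ((k:ℕ) = (j:ℕ)-1) := by simpa [Fin.ext_iff] using hk
        rw [if_neg (by omega)]),
        if_pos (show (j:ℕ)-1+1 = (j:ℕ) by omega), if_neg (show ¬ (0:ℕ) = (j:ℕ) by omega)]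
      decide
  · have hsl : ((i:ℕ) + t) % n ≤ n - 2 := by omega
    rw [sum_eq_at ⟨((i:ℕ)+t) % n, by omega⟩ _ (fun k hk => by
      have hk' : ¬ (((i:ℕ)+t) % n = (k:ℕ)) := by
        simpa [Fin.ext_iff, eq_comm] using hk
      simp only [Mmat, Matrix.of_apply]
      rw [if_neg hs1, if_neg hk', zero_mul])]
    have hc : (((⟨((i:ℕ)+t) % n, by omega⟩ : Fin (n-1))):ℕ) = ((i:ℕ)+t) % n := rfl
    simp only [Mmat, Matrix.of_apply, hc, hmod]
    rw [if_neg hs1, if_pos trivial, one_mul]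

lemma hM0 (n : ℕ) (hn : 3 ≤ n) : Mmat n 0 = 1 := by
  ext i j
  have hi := i.isLt
  have hj := j.isLt
  have : ((i:ℕ) + 0) % n = (i:ℕ) := by rw [Nat.add_zero]; exact Nat.mod_eq_of_lt (by omega)
  simp only [Mmat, Matrix.of_apply, this, Matrix.one_apply]
  split_ifs <;> first | rfl | (exfalso; omega)

lemma hWpow (n : ℕ) (hn : 3 ≤ n) (t : ℕ) : (Umat n * Vmat n) ^ t = Mmat n t := by
  induction t with
  | zero => rw [pow_zero, hM0 n hn]
  | succ t ih => rw [pow_succ, ih, hUV n hn, hstep n hn]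

lemma hWn (n : ℕ) (hn : 3 ≤ n) : (Umat n * Vmat n) ^ n = 1 := by
  rw [hWpow n hn]
  ext i j
  have hi := i.isLt
  have hj := j.isLt
  have : ((i:ℕ) + n) % n = (i:ℕ) := by rw [Nat.add_mod_right]; exact Nat.mod_eq_of_lt (by omega)
  simp only [Mmat, Matrix.of_apply, this, Matrix.one_apply]
  split_ifs <;> first | rfl | (exfalso; omega)

lemma hWk_ne (n : ℕ) (hn : 3 ≤ n) (k : ℕ) (hk0 : 0 < k) (hkn : k < n) :
    Mmat n k ≠ 1 := by
  intro h
  by_cases hk : k ≤ n - 2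
  · have := congrFun (congrFun h (⟨0, by omega⟩ : Fin (n-1))) (⟨0, by omega⟩ : Fin (n-1))
    simp only [Mmat, Matrix.of_apply, Matrix.one_apply, if_pos rfl] at this
    rw [show ((0:ℕ) + k) % n = k from by rw [Nat.zero_add]; exact Nat.mod_eq_of_lt hkn,
      if_neg (by omega), if_neg (by omega)] at this
    exact zero_ne_one this
  · have hk1 : k = n - 1 := by omega
    have := congrFun (congrFun h (⟨0, by omega⟩ : Fin (n-1))) (⟨1, by omega⟩ : Fin (n-1))
    simp only [Mmat, Matrix.of_apply, Matrix.one_apply] at this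
    rw [show ((0:ℕ) + k) % n = n - 1 from by rw [Nat.zero_add, hk1]; exact Nat.mod_eq_of_lt (by omega),
      if_pos rfl, if_neg (by simp [Fin.ext_iff])] at this
    exact one_ne_zero this

lemma hV_ne (n : ℕ) (hn : 3 ≤ n) (k : ℕ) (hkn : k < n) : Vmat n ≠ Mmat n k := by
  intro h
  by_cases hk : k ≤ n - 3
  · have := congrFun (congrFun h (⟨0, by omega⟩ : Fin (n-1))) (⟨n-2, by omega⟩ : Fin (n-1))
    simp only [Vmat, Mmat, Matrix.of_apply] at this
    rw [if_pos (show (0:ℕ) + (n-2) = n - 2 from Nat.zero_add _),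
      show ((0:ℕ) + k) % n = k from by rw [Nat.zero_add]; exact Nat.mod_eq_of_lt hkn,
      if_neg (by omega), if_neg (by omega)] at this
    exact one_ne_zero this
  · by_cases hk2 : k = n - 2
    · have := congrFun (congrFun h (⟨1, by omega⟩ : Fin (n-1))) (⟨n-2, by omega⟩ : Fin (n-1))
      simp only [Vmat, Mmat, Matrix.of_apply] at this
      rw [if_neg (by omega),
        show ((1:ℕ) + k) % n = n - 1 from by
          rw [hk2, show (1:ℕ) + (n-2) = n - 1 by omega]; exact Nat.mod_eq_of_lt (by omega),
        if_pos rfl] at this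
      exact zero_ne_one this
    · have hk1 : k = n - 1 := by omega
      have := congrFun (congrFun h (⟨0, by omega⟩ : Fin (n-1))) (⟨0, by omega⟩ : Fin (n-1))
      simp only [Vmat, Mmat, Matrix.of_apply] at this
      rw [if_neg (by omega),
        show ((0:ℕ) + k) % n = n - 1 from by rw [Nat.zero_add, hk1]; exact Nat.mod_eq_of_lt (by omega),
        if_pos rfl] at this
      exact zero_ne_one this


/-- `U² = V² = I`, `(UV)ⁿ = I`, and the subgroup of `GL(n-1, F₂)` generated by `U` and `V`
is isomorphic to the dihedral group of order `2n`. -/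
theorem stmt_6 (n : ℕ) (hn : 3 ≤ n) :
    Umat n ^ 2 = 1 ∧ Vmat n ^ 2 = 1 ∧ (Umat n * Vmat n) ^ n = 1 ∧
    ∀ U' V' : (Matrix (Fin (n-1)) (Fin (n-1)) (ZMod 2))ˣ,
      (U' : Matrix (Fin (n-1)) (Fin (n-1)) (ZMod 2)) = Umat n →
      (V' : Matrix (Fin (n-1)) (Fin (n-1)) (ZMod 2)) = Vmat n →
      Nonempty ((Subgroup.closure {U', V'} : Subgroup (Matrix (Fin (n-1)) (Fin (n-1)) (ZMod 2))ˣ)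
        ≃* DihedralGroup n) := by
  refine ⟨Usq n hn, Vsq n hn, hWn n hn, ?_⟩
  intro U' V' hU' hV'
  haveI : NeZero n := ⟨by omega⟩
  haveI : Fact (1 < n) := ⟨by omega⟩
  set x : (Matrix (Fin (n-1)) (Fin (n-1)) (ZMod 2))ˣ := U' * V' with hxdef
  have hy2 : V' * V' = 1 := Units.ext (by
    rw [Units.val_mul, hV', Units.val_one, ← pow_two]; exact Vsq n hn)
  have hxU : x * V' = U' := by
    rw [hxdef, mul_assoc, hy2, mul_one]
  have hxn : x ^ n = 1 := Units.ext (by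
    rw [Units.val_pow_eq_pow_val, Units.val_mul, hU', hV', Units.val_one]
    exact hWn n hn)
  have hxval : ∀ k : ℕ, ((x ^ k : _ˣ) : Matrix (Fin (n-1)) (Fin (n-1)) (ZMod 2))
      = Mmat n k := fun k => by
    rw [Units.val_pow_eq_pow_val, Units.val_mul, hU', hV']
    exact hWpow n hn k
  have hVx : V' * x * V' = x⁻¹ := by
    apply eq_inv_of_mul_eq_one_right
    have hU2 : U' * U' = 1 := Units.ext (by
      rw [Units.val_mul, hU', Units.val_one, ← pow_two]; exact Usq n hn)
    calc x * (V' * x * V') = (x * V') * (x * V') := by group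
      _ = U' * U' := by rw [hxU]
      _ = 1 := hU2
  have hVx' : V' * x = x⁻¹ * V' := by
    have := congrArg (· * V') hVx
    simpa [mul_assoc, hy2] using this
  have hVxk : ∀ k : ℕ, V' * x ^ k = (x ^ k)⁻¹ * V' := by
    intro k
    induction k with
    | zero => simp
    | succ k ih =>
      calc V' * x ^ (k+1) = (V' * x ^ k) * x := by rw [pow_succ, mul_assoc]
        _ = (x ^ k)⁻¹ * (V' * x) := by rw [ih, mul_assoc]
        _ = ((x ^ k)⁻¹ * x⁻¹) * V' := by rw [hVx', mul_assoc]
        _ = (x ^ (k+1))⁻¹ * V' := by rw [← mul_inv_rev, ← pow_succ']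
  -- χ : ZMod n → units
  set χ : ZMod n → (Matrix (Fin (n-1)) (Fin (n-1)) (ZMod 2))ˣ := fun a => x ^ a.val with hχdef
  have hχ_add : ∀ a b : ZMod n, χ (a + b) = χ a * χ b := by
    intro a b
    show x ^ (a + b).val = x ^ a.val * x ^ b.val
    rw [← pow_add, ZMod.val_add, ← pow_eq_pow_mod _ hxn]
  have hχ_zero : χ 0 = 1 := by
    show x ^ (0 : ZMod n).val = 1
    rw [ZMod.val_zero, pow_zero]
  have hχ_neg : ∀ a : ZMod n, χ (-a) = (χ a)⁻¹ := by
    intro a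
    apply eq_inv_of_mul_eq_one_left
    rw [← hχ_add, neg_add_cancel, hχ_zero]
  have hVχ : ∀ a : ZMod n, V' * χ a = (χ a)⁻¹ * V' := fun a => hVxk a.val
  have hswap : ∀ a : ZMod n, χ a * V' = V' * χ (-a) := fun a => by
    rw [hVχ (-a), hχ_neg, inv_inv]
  -- the homomorphism
  let f : DihedralGroup n → (Matrix (Fin (n-1)) (Fin (n-1)) (ZMod 2))ˣ := fun g =>
    match g with
    | .r a => χ a
    | .sr a => V' * χ a
  have hf_r : ∀ a, f (.r a) = χ a := fun a => rfl
  have hf_sr : ∀ a, f (.sr a) = V' * χ a := fun a => rfl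
  let φ : DihedralGroup n →* (Matrix (Fin (n-1)) (Fin (n-1)) (ZMod 2))ˣ :=
    { toFun := f
      map_one' := by
        show χ 0 = 1
        exact hχ_zero
      map_mul' := by
        rintro (a | a) (b | b)
        · show χ (a + b) = χ a * χ b
          exact hχ_add a b
        · show V' * χ (b - a) = χ a * (V' * χ b)
          rw [← mul_assoc, hswap, mul_assoc, ← hχ_add, neg_add_eq_sub]
        · show V' * χ (a + b) = (V' * χ a) * χ b
          rw [mul_assoc, hχ_add]
        · show χ (b - a) = (V' * χ a) * (V' * χ b)
          symm
          calc (V' * χ a) * (V' * χ b) = V' * ((χ a * V') * χ b) := by group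
            _ = V' * ((V' * χ (-a)) * χ b) := by rw [hswap]
            _ = (V' * V') * (χ (-a) * χ b) := by group
            _ = χ (b - a) := by rw [hy2, one_mul, ← hχ_add, neg_add_eq_sub] }
  have hφ_r : ∀ a, φ (.r a) = χ a := fun a => rfl
  have hφ_sr : ∀ a, φ (.sr a) = V' * χ a := fun a => rfl
  have hinj : Function.Injective φ := by
    rw [injective_iff_map_eq_one]
    rintro (a | a) h
    · rw [hφ_r] at h
      have hval : x ^ a.val = 1 := h
      have h0 : a.val = 0 := by
        by_contra h0
        apply hWk_ne n hn a.val (Nat.pos_of_ne_zero h0) (ZMod.val_lt a)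
        rw [← hxval a.val, hval, Units.val_one]
      have : a = 0 := by
        rwa [ZMod.val_eq_zero] at h0
      rw [this, ← DihedralGroup.one_def]
    · exfalso
      rw [hφ_sr] at h
      have hVeq : V' = (χ a)⁻¹ := eq_inv_of_mul_eq_one_left h
      rw [← hχ_neg] at hVeq
      apply hV_ne n hn (-a).val (ZMod.val_lt (-a))
      rw [← hV', hVeq]
      exact hxval (-a).val
  have hU'mem : U' ∈ Subgroup.closure ({U', V'} :
      Set (Matrix (Fin (n-1)) (Fin (n-1)) (ZMod 2))ˣ) :=
    Subgroup.subset_closure (Set.mem_insert _ _)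
  have hV'mem : V' ∈ Subgroup.closure ({U', V'} :
      Set (Matrix (Fin (n-1)) (Fin (n-1)) (ZMod 2))ˣ) :=
    Subgroup.subset_closure (Set.mem_insert_of_mem _ rfl)
  have hχmem : ∀ a : ZMod n, χ a ∈ Subgroup.closure ({U', V'} :
      Set (Matrix (Fin (n-1)) (Fin (n-1)) (ZMod 2))ˣ) := fun a =>
    pow_mem (mul_mem hU'mem hV'mem) _
  have hχ_one : χ 1 = x := by
    show x ^ (1 : ZMod n).val = x
    rw [ZMod.val_one, pow_one]
  have hrange : φ.range = Subgroup.closure {U', V'} := by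
    apply le_antisymm
    · rintro g ⟨d, rfl⟩
      rcases d with a | a
      · rw [hφ_r]; exact hχmem a
      · rw [hφ_sr]
        exact mul_mem hV'mem (hχmem a)
    · rw [Subgroup.closure_le]
      rintro g (rfl | rfl)
      · refine ⟨.r 1 * .sr 0, ?_⟩
        rw [map_mul, hφ_r, hφ_sr, hχ_one, hχ_zero, mul_one, hxU]
      · exact ⟨.sr 0, by rw [hφ_sr, hχ_zero, mul_one]⟩
  exact ⟨((MonoidHom.ofInjective hinj).trans (MulEquiv.subgroupCongr hrange)).symm⟩
end

section
/- In the group G = F_2^{n-1} ⋊_φ D_{2n}, the element ρ_1ρ_2 has order exactly n, where ρ_1 = (0,h_1) and ρ_2 = ((0,...,0,1)^T, h_0). -/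
/-!
Write `g = ρ₁ρ₂`. Since `h₁h₀ = r⁻¹`, one has `g = (v, r⁻¹)` with `v = Vu = e₀`, and `r⁻¹` acts by
`M = VU`, which sends `e_k` to `e₀ + e_{k+1}` (and `e_{n-2}` to `e₀`). In characteristic 2 this gives
`g^{k+1} = (e_k, r^{-(k+1)})` by induction, so `g^n = (0, 1)`. Conversely the image `r⁻¹` of `g` in
`D_{2n}` has order `n`.
-/

open Matrix DihedralGroup

/-- u = (0,…,0,1)ᵀ ∈ F₂^{n-1}. -/
def uVec (n : ℕ) : Fin (n-1) → ZMod 2 := fun i => if (i : ℕ) = n - 2 then 1 else 0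

/-- Compatibility: in the older Mathlib `AddAut A` carried a multiplicative `Group` structure
(composition); it is now an additive group, so the old structure is restored here. -/
instance addAutGroupOld (A : Type*) [Add A] : Group (AddAut A) where
  mul g h := AddEquiv.trans h g
  one := AddEquiv.refl _
  inv := AddEquiv.symm
  mul_assoc _ _ _ := rfl
  one_mul _ := rfl
  mul_one _ := rfl
  inv_mul_cancel := AddEquiv.self_trans_symm

@[simp]
theorem addAutGroupOld_mul_apply (A : Type*) [Add A] (e₁ e₂ : AddAut A) (m : A) :
    (e₁ * e₂) m = e₁ (e₂ m) :=
  rfl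

@[simp]
theorem addAutGroupOld_one_apply (A : Type*) [Add A] (m : A) : (1 : AddAut A) m = m :=
  rfl

/-- The action of `D_{2n}` on `F₂^{n-1}` (written multiplicatively) induced by a
representation `φ : D_{2n} → Aut(F₂^{n-1})`. -/
def dihAct (n : ℕ) (φ : DihedralGroup n →* AddAut (Fin (n-1) → ZMod 2)) :
    DihedralGroup n →* MulAut (Multiplicative (Fin (n-1) → ZMod 2)) where
  toFun x := AddEquiv.toMultiplicative (φ x)
  map_one' := by ext w; simp
  map_mul' x y := by ext w; simp

/-- The semidirect product `G = F₂^{n-1} ⋊_φ D_{2n}`. -/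
abbrev Gsd (n : ℕ) (φ : DihedralGroup n →* AddAut (Fin (n-1) → ZMod 2)) :=
  Multiplicative (Fin (n-1) → ZMod 2) ⋊[dihAct n φ] DihedralGroup n

/-- `ρ₀ = (0, h₀)`, where `h₀ = sr 0`. -/
def rho0 (n : ℕ) (φ : DihedralGroup n →* AddAut (Fin (n-1) → ZMod 2)) : Gsd n φ :=
  ⟨Multiplicative.ofAdd 0, sr 0⟩

/-- `ρ₁ = (0, h₁)`, where `h₁ = sr 1`. -/
def rho1 (n : ℕ) (φ : DihedralGroup n →* AddAut (Fin (n-1) → ZMod 2)) : Gsd n φ :=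
  ⟨Multiplicative.ofAdd 0, sr 1⟩

/-- `ρ₂ = (u, h₀)`, where `u = (0,…,0,1)ᵀ`. -/
def rho2 (n : ℕ) (φ : DihedralGroup n →* AddAut (Fin (n-1) → ZMod 2)) : Gsd n φ :=
  ⟨Multiplicative.ofAdd (uVec n), sr 0⟩

theorem orderOf_eq_of_pow_eq_one_of_orderOf_map {G H : Type*} [Monoid G] [Monoid H]
    (f : G →* H) {g : G} {m : ℕ} (hg : g ^ m = 1) (hfg : orderOf (f g) = m) : orderOf g = m :=
  Nat.dvd_antisymm (orderOf_dvd_of_pow_eq_one hg) (hfg ▸ orderOf_map_dvd f g)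

/-- The standard basis vector `e_k` of `F₂^{n-1}`. Indexing by `k : ℕ` makes `e_{n-1} = 0`, so that
`VU e_k = e₀ + e_{k+1}` holds uniformly for `k ≤ n - 2`. -/
def basisVec (n k : ℕ) : Fin (n-1) → ZMod 2 := fun i => if (i : ℕ) = k then 1 else 0

theorem basisVec_eq_zero {n k : ℕ} (hk : n - 1 ≤ k) : basisVec n k = 0 := by
  funext i
  have := i.isLt
  simp only [basisVec, Pi.zero_apply]
  rw [if_neg (by omega)]

theorem mulVec_basisVec {n : ℕ} (A : Matrix (Fin (n-1)) (Fin (n-1)) (ZMod 2)) (j : Fin (n-1)) :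
    A *ᵥ basisVec n j = fun i => A i j := by
  have : basisVec n j = Pi.single j 1 := by
    funext i
    simp [basisVec, Pi.single_apply, Fin.ext_iff]
  rw [this, mulVec_single_one]
  rfl

theorem vVec_eq_basisVec (n : ℕ) : vVec n = basisVec n 0 :=
  rfl

theorem Vmat_mulVec_uVec (n : ℕ) : Vmat n *ᵥ uVec n = vVec n := by
  rcases Nat.lt_or_ge (n - 2) (n - 1) with hn | hn
  · rw [show uVec n = basisVec n (⟨n - 2, hn⟩ : Fin (n-1)) from rfl, mulVec_basisVec]
    funext i
    simp only [Vmat, of_apply, vVec]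
    split_ifs <;> first | rfl | omega
  · funext i
    exact absurd i.isLt (by omega)

/-- `VU` sends `w` to `(∑ w, w₀, …, w_{n-3})`. -/
theorem Vmat_mulVec_Umat_mulVec_basisVec {n k : ℕ} (hk : k < n - 1) :
    Vmat n *ᵥ (Umat n *ᵥ basisVec n k) = basisVec n 0 + basisVec n (k + 1) := by
  rw [show basisVec n k = basisVec n (⟨k, hk⟩ : Fin (n-1)) from rfl, mulVec_basisVec]
  funext i
  have hi := i.isLt
  simp only [mulVec, dotProduct, Vmat, Umat, of_apply, Pi.add_apply, basisVec]
  rw [Finset.sum_eq_single ⟨n - 2 - i, by omega⟩]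
  · dsimp only
    split_ifs <;> first | decide | omega
  · intro j _ hj
    rw [if_neg (fun h => hj (Fin.ext (by dsimp only; omega))), zero_mul]
  · exact fun h => absurd (Finset.mem_univ _) h

section

variable {n : ℕ} {φ : DihedralGroup n →* AddAut (Fin (n-1) → ZMod 2)}

theorem Gsd_mk_mul_mk (a b : Fin (n-1) → ZMod 2) (x y : DihedralGroup n) :
    (⟨.ofAdd a, x⟩ : Gsd n φ) * ⟨.ofAdd b, y⟩ = ⟨.ofAdd (a + φ x b), x * y⟩ :=
  rfl

theorem rho1_mul_rho2 (hφ1 : ∀ w, φ (sr 1) w = Vmat n *ᵥ w) :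
    rho1 n φ * rho2 n φ = ⟨.ofAdd (vVec n), r (-1)⟩ := by
  rw [rho1, rho2, Gsd_mk_mul_mk, hφ1, Vmat_mulVec_uVec, zero_add, sr_mul_sr, zero_sub]

theorem apply_r_neg_one (hφ0 : ∀ w, φ (sr 0) w = Umat n *ᵥ w)
    (hφ1 : ∀ w, φ (sr 1) w = Vmat n *ᵥ w) (w : Fin (n-1) → ZMod 2) :
    φ (r (-1)) w = Vmat n *ᵥ (Umat n *ᵥ w) := by
  rw [← zero_sub, ← sr_mul_sr, map_mul, addAutGroupOld_mul_apply, hφ0, hφ1]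

theorem rho1_mul_rho2_pow_succ (hφ0 : ∀ w, φ (sr 0) w = Umat n *ᵥ w)
    (hφ1 : ∀ w, φ (sr 1) w = Vmat n *ᵥ w) {k : ℕ} (hk : k < n) :
    (rho1 n φ * rho2 n φ) ^ (k + 1) = ⟨.ofAdd (basisVec n k), r (-(k + 1))⟩ := by
  induction k with
  | zero => simp [rho1_mul_rho2 hφ1, vVec_eq_basisVec]
  | succ k ih =>
    rw [pow_succ', ih (by omega), rho1_mul_rho2 hφ1, Gsd_mk_mul_mk, apply_r_neg_one hφ0 hφ1,
      Vmat_mulVec_Umat_mulVec_basisVec (by omega), vVec_eq_basisVec,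
      ← add_assoc, ZModModule.add_self, zero_add, r_mul_r]
    congr 2
    push_cast
    ring

theorem rho1_mul_rho2_pow_self (hφ0 : ∀ w, φ (sr 0) w = Umat n *ᵥ w)
    (hφ1 : ∀ w, φ (sr 1) w = Vmat n *ᵥ w) : (rho1 n φ * rho2 n φ) ^ n = 1 := by
  rcases n with _ | n
  · exact pow_zero _
  · rw [rho1_mul_rho2_pow_succ hφ0 hφ1 n.lt_add_one, basisVec_eq_zero (by omega)]
    have hn : ((n : ZMod (n + 1)) + 1) = 0 := by exact_mod_cast ZMod.natCast_self (n + 1)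
    rw [hn, neg_zero]
    rfl

end

theorem orderOf_r_neg_one (n : ℕ) : orderOf (r (-1) : DihedralGroup n) = n := by
  rw [← inv_r, orderOf_inv, orderOf_r_one]

theorem stmt_11_general (n : ℕ)
    (φ : DihedralGroup n →* AddAut (Fin (n-1) → ZMod 2))
    (hφ0 : ∀ w, φ (sr 0) w = (Umat n).mulVec w)
    (hφ1 : ∀ w, φ (sr 1) w = (Vmat n).mulVec w) :
    orderOf (rho1 n φ * rho2 n φ) = n :=
  orderOf_eq_of_pow_eq_one_of_orderOf_map SemidirectProduct.rightHom
    (rho1_mul_rho2_pow_self hφ0 hφ1) (by rw [rho1_mul_rho2 hφ1]; exact orderOf_r_neg_one n)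

/-- ρ1ρ2 has order exactly n. -/
theorem stmt_11 (n : ℕ) (hn : 3 ≤ n)
    (φ : DihedralGroup n →* AddAut (Fin (n-1) → ZMod 2))
    (hφ0 : ∀ w, φ (sr 0) w = (Umat n).mulVec w)
    (hφ1 : ∀ w, φ (sr 1) w = (Vmat n).mulVec w) :
    orderOf (rho1 n φ * rho2 n φ) = n :=
  stmt_11_general n φ hφ0 hφ1
end

section
/- Let H be the group with presentation ⟨μ_0, μ_1, μ_2 | μ_0² = μ_1² = μ_2² = (μ_0μ_2)² = (μ_0μ_1)^n = (μ_1μ_2)^n = 1, ((μ_1μ_2)^k(μ_0μ_1)^k)² = 1 for 1 ≤ k ≤ n-1⟩. Then the subgroup N = ⟨(μ_1μ_2)^k(μ_0μ_1)^k : 1 ≤ k ≤ n-1⟩ is abelian, with every element of order dividing 2, and |N| ≤ 2^{n-1}. -/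
/-- The relations of the presentation: generators `μ₀, μ₁, μ₂` (indexed by `Fin 3`), with
`μ₀² = μ₁² = μ₂² = (μ₀μ₂)² = (μ₀μ₁)ⁿ = (μ₁μ₂)ⁿ = 1` and
`((μ₁μ₂)^k (μ₀μ₁)^k)² = 1` for `1 ≤ k ≤ n-1`. -/
def polyRels (n : ℕ) : Set (FreeGroup (Fin 3)) :=
  {FreeGroup.of 0 ^ 2, FreeGroup.of 1 ^ 2, FreeGroup.of 2 ^ 2,
   (FreeGroup.of 0 * FreeGroup.of 2) ^ 2,
   (FreeGroup.of 0 * FreeGroup.of 1) ^ n,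
   (FreeGroup.of 1 * FreeGroup.of 2) ^ n} ∪
  {w | ∃ k : ℕ, 1 ≤ k ∧ k ≤ n - 1 ∧
    w = ((FreeGroup.of 1 * FreeGroup.of 2) ^ k * (FreeGroup.of 0 * FreeGroup.of 1) ^ k) ^ 2}

/-- `H` is the quotient of the Coxeter group `[n,n]` by the additional relations, i.e. the
group presented by `polyRels n`. -/
abbrev Hgrp (n : ℕ) := PresentedGroup (polyRels n)

/-- The images `μ₀, μ₁, μ₂` of the generators in `H`. -/
def mu (n : ℕ) (i : Fin 3) : Hgrp n := PresentedGroup.of i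

/-- The subgroup `N = ⟨(μ₁μ₂)^k (μ₀μ₁)^k : 1 ≤ k ≤ n-1⟩` of `H` is abelian, every element
has order dividing 2, and `|N| ≤ 2^{n-1}`. -/
theorem stmt_17 (n : ℕ) (hn : 3 ≤ n) :
    ∀ N : Subgroup (Hgrp n),
      N = Subgroup.closure {x : Hgrp n | ∃ k : ℕ, 1 ≤ k ∧ k ≤ n - 1 ∧
        x = (mu n 1 * mu n 2) ^ k * (mu n 0 * mu n 1) ^ k} →
      (∀ a ∈ N, ∀ b ∈ N, a * b = b * a) ∧ (∀ a ∈ N, a ^ 2 = 1) ∧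
      Nat.card N ≤ 2 ^ (n - 1) := by
  intro N hN
  subst hN
  set a : Hgrp n := mu n 1 * mu n 2 with ha_def
  set b : Hgrp n := mu n 0 * mu n 1 with hb_def
  set S : Set (Hgrp n) := {x | ∃ k : ℕ, 1 ≤ k ∧ k ≤ n - 1 ∧ x = a ^ k * b ^ k} with hS_def
  have hmk : ∀ r ∈ polyRels n, PresentedGroup.mk (polyRels n) r = 1 := fun r hr =>
    (QuotientGroup.eq_one_iff _).2 (Subgroup.subset_normalClosure hr)
  have ha_n : a ^ n = 1 := by
    have h := hmk _ (Or.inl (show (FreeGroup.of 1 * FreeGroup.of 2) ^ n ∈ _ by simp))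
    simpa [ha_def, mu, PresentedGroup.of, map_pow, map_mul] using h
  have hb_n : b ^ n = 1 := by
    have h := hmk _ (Or.inl (show (FreeGroup.of 0 * FreeGroup.of 1) ^ n ∈ _ by simp))
    simpa [hb_def, mu, PresentedGroup.of, map_pow, map_mul] using h
  have hx0 : ∀ k : ℕ, 1 ≤ k → k ≤ n - 1 → (a ^ k * b ^ k) ^ 2 = 1 := by
    intro k h1 h2
    have h := hmk _ (Or.inr ⟨k, h1, h2, rfl⟩)
    simpa [ha_def, hb_def, mu, PresentedGroup.of, map_pow, map_mul] using h
  have hxnat : ∀ k : ℕ, (a ^ k * b ^ k) ^ 2 = 1 := by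
    intro k
    have hn0 : 0 < n := by omega
    rcases Nat.eq_zero_or_pos (k % n) with h | h
    · have hak : a ^ k = 1 := by rw [pow_eq_pow_mod k ha_n, h, pow_zero]
      have hbk : b ^ k = 1 := by rw [pow_eq_pow_mod k hb_n, h, pow_zero]
      simp [hak, hbk]
    · rw [pow_eq_pow_mod k ha_n, pow_eq_pow_mod k hb_n]
      have := Nat.mod_lt k hn0
      exact hx0 _ h (by omega)
  have hz : ∀ m : ℤ, (a ^ m * b ^ m) ^ 2 = 1 := by
    intro m
    have hr0 : (0 : ℤ) ≤ m % (n : ℤ) := Int.emod_nonneg m (by exact_mod_cast (by omega : n ≠ 0))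
    have hA : a ^ m = a ^ (m % (n : ℤ)).toNat := by
      rw [zpow_eq_zpow_emod' m ha_n, ← zpow_natCast, Int.toNat_of_nonneg hr0]
    have hB : b ^ m = b ^ (m % (n : ℤ)).toNat := by
      rw [zpow_eq_zpow_emod' m hb_n, ← zpow_natCast, Int.toNat_of_nonneg hr0]
    rw [hA, hB]
    exact hxnat _
  have key : ∀ m : ℤ, b ^ m = a ^ (-m) * b ^ (-m) * a ^ (-m) := by
    intro m
    have h := hz m
    rw [sq] at h
    have h2 : b ^ m = a ^ (-m) * ((a ^ m * b ^ m) * (a ^ m * b ^ m)) * b ^ (-m) * a ^ (-m) := by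
      group
    rw [h] at h2
    simpa using h2
  have hinv : ∀ m : ℤ, a ^ m * b ^ m = b ^ (-m) * a ^ (-m) := by
    intro m
    have h := hz m
    rw [sq] at h
    have h2 : (a ^ m * b ^ m)⁻¹ = a ^ m * b ^ m := inv_eq_of_mul_eq_one_right h
    rw [← h2]
    group
  have hcz : ∀ j k : ℤ, (a ^ j * b ^ j) * (a ^ k * b ^ k) = (a ^ k * b ^ k) * (a ^ j * b ^ j) := by
    intro j k
    have e1 : (a ^ j * b ^ j) * (a ^ k * b ^ k) = a ^ j * b ^ (j - k) * a ^ (-k) := by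
      rw [hinv k]; group
    have e2 : (a ^ k * b ^ k) * (a ^ j * b ^ j) = a ^ k * b ^ (k - j) * a ^ (-j) := by
      rw [hinv j]; group
    rw [e1, e2, key (j - k)]
    group
  have hcn : ∀ j k : ℕ, (a ^ j * b ^ j) * (a ^ k * b ^ k) = (a ^ k * b ^ k) * (a ^ j * b ^ j) := by
    intro j k
    have := hcz j k
    simpa [zpow_natCast] using this
  have hScomm : ∀ x ∈ S, ∀ y ∈ S, Commute x y := by
    rintro x ⟨j, -, -, rfl⟩ y ⟨k, -, -, rfl⟩
    exact hcn j k
  have h1 : ∀ y ∈ S, ∀ x ∈ Subgroup.closure S, Commute y x := by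
    intro y hy x hx
    refine Subgroup.closure_induction (p := fun z _ => Commute y z)
      (fun z hz => hScomm y hy z hz) (Commute.one_right y)
      (fun u v _ _ hu hv => hu.mul_right hv) (fun u _ hu => hu.inv_right) hx
  have hC : ∀ x ∈ Subgroup.closure S, ∀ y ∈ Subgroup.closure S, Commute x y := by
    intro x hx y hy
    refine Subgroup.closure_induction (p := fun z _ => Commute z y)
      (fun z hz => h1 z hz y hy) (Commute.one_left y)
      (fun u v _ _ hu hv => hu.mul_left hv) (fun u _ hu => hu.inv_left) hx
  have hsq : ∀ x ∈ Subgroup.closure S, x ^ 2 = 1 := by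
    intro x hx
    refine Subgroup.closure_induction (p := fun z _ => z ^ 2 = 1) ?_ (by simp) ?_ ?_ hx
    · rintro z ⟨k, -, -, rfl⟩
      exact hxnat k
    · intro u v hu hv h2u h2v
      rw [(hC u hu v hv).mul_pow, h2u, h2v, one_mul]
    · intro u _ hu
      rw [inv_pow, hu, inv_one]
  refine ⟨fun x hx y hy => hC x hx y hy, hsq, ?_⟩
  -- cardinality bound
  letI : CommGroup ↥(Subgroup.closure S) :=
    { (inferInstance : Group ↥(Subgroup.closure S)) with
      mul_comm := fun x y => Subtype.ext (hC _ x.2 _ y.2) }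
  have gmem : ∀ i : Fin (n - 1), a ^ (i.1 + 1) * b ^ (i.1 + 1) ∈ Subgroup.closure S := by
    intro i
    have := i.2
    exact Subgroup.subset_closure ⟨i.1 + 1, by omega, by omega, rfl⟩
  set g : Fin (n - 1) → ↥(Subgroup.closure S) :=
    fun i => ⟨a ^ (i.1 + 1) * b ^ (i.1 + 1), gmem i⟩ with hg_def
  have coe_pow : ∀ (t : ↥(Subgroup.closure S)) (k : ℕ),
      ((t ^ k : ↥(Subgroup.closure S)) : Hgrp n) = (t : Hgrp n) ^ k := by
    intro t k
    induction k with
    | zero => simp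
    | succ k ih => rw [pow_succ, pow_succ, ← ih]; rfl
  have hg2 : ∀ i, g i ^ 2 = 1 := by
    intro i
    apply Subtype.ext
    rw [coe_pow]
    exact hsq _ (gmem i)
  set f : (Fin (n - 1) → ZMod 2) → ↥(Subgroup.closure S) :=
    fun c => ∏ i, g i ^ (c i).val with hf_def
  have hf1 : f 0 = 1 := by
    simp [hf_def, ZMod.val_zero]
  have hfmul : ∀ c d, f (c + d) = f c * f d := by
    intro c d
    rw [hf_def]
    simp only []
    rw [← Finset.prod_mul_distrib]
    apply Finset.prod_congr rfl
    intro i _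
    rw [← pow_add, Pi.add_apply, ZMod.val_add, ← pow_eq_pow_mod _ (hg2 i)]
  have hsurj : ∀ x ∈ Subgroup.closure S, ∃ c, ((f c : ↥(Subgroup.closure S)) : Hgrp n) = x := by
    intro x hx
    refine Subgroup.closure_induction
      (p := fun z _ => ∃ c, ((f c : ↥(Subgroup.closure S)) : Hgrp n) = z) ?_ ?_ ?_ ?_ hx
    · rintro z ⟨k, hk1, hk2, rfl⟩
      have hklt : k - 1 < n - 1 := by omega
      refine ⟨fun i => if i.1 = k - 1 then 1 else 0, ?_⟩
      have hone : f (fun i => if i.1 = k - 1 then 1 else 0) = g ⟨k - 1, hklt⟩ := by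
        rw [hf_def]
        show (∏ i : Fin (n - 1), g i ^ ((if (i : ℕ) = k - 1 then (1 : ZMod 2) else 0)).val) = _
        rw [Finset.prod_eq_single (⟨k - 1, hklt⟩ : Fin (n - 1))]
        · simp [ZMod.val_one]
        · intro j _ hj
          have hj' : ¬ (j.1 = k - 1) := fun hcon => hj (Fin.ext hcon)
          simp [hj', ZMod.val_zero]
        · intro habs
          exact absurd (Finset.mem_univ _) habs
      rw [hone, hg_def]
      show a ^ (k - 1 + 1) * b ^ (k - 1 + 1) = a ^ k * b ^ k
      rw [Nat.sub_add_cancel hk1]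
    · exact ⟨0, by rw [hf1]; rfl⟩
    · rintro u v hu hv ⟨c, rfl⟩ ⟨d, rfl⟩
      exact ⟨c + d, by rw [hfmul]; rfl⟩
    · rintro u hu ⟨c, rfl⟩
      refine ⟨c, ?_⟩
      have hm : ((f c : ↥(Subgroup.closure S)) : Hgrp n) ∈ Subgroup.closure S := (f c).2
      have hsq' := hsq _ hm
      rw [sq] at hsq'
      exact (inv_eq_of_mul_eq_one_right hsq').symm
  have hsurj' : Function.Surjective f := by
    intro y
    obtain ⟨c, hc⟩ := hsurj y.1 y.2
    exact ⟨c, Subtype.ext hc⟩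
  calc Nat.card ↥(Subgroup.closure S) ≤ Nat.card (Fin (n - 1) → ZMod 2) :=
        Nat.card_le_card_of_surjective f hsurj'
    _ = 2 ^ (n - 1) := by
        rw [Nat.card_eq_fintype_card, Fintype.card_fun]
        simp
end
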